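/- arXiv:1801.08371 — 2 statements merged into one kernel-verified Lean document; each statement's English description precedes it below -/
import Mathlib

section
/- Let N ≥ 1 and let L be a positive operator on the N-partite Hilbert space H. Suppose the family of unit vectors a = (a_0, …, a_{N-1}) maximizes ⟨P(b), L P(b)⟩ over all families b of unit vectors, and set Ψ = L P(a). Define φ in the last factor EuclideanSpace ℂ (Fin (d (N-1))) by φ k = ⟨P(a)[N-1 ↦ e_k], Ψ⟩, i.e., φ is the contraction ⟨a₀,…,a_{N-2}, · |Ψ⟩. Then there exists ν ∈ ℂ with ν ≠ 0 such that ν • a_{N-1} = φ; in fact one may take ν = ⟨P(a), L P(a)⟩ > 0. (Theorem 2, Backward iteration: at a maximizer the last component is proportional to the contraction of Ψ against the remaining components.) -/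
/-!
The map `x ↦ P(a[N-1 ↦ x])` is linear, call it `A`, and `A (a_{N-1}) = P(a)`. Restricted to
the last component, the maximality of `a` says that `a_{N-1}` maximizes the Rayleigh quotient
of the self-adjoint compression `A† L A` on the unit sphere, so it is an eigenvector with
eigenvalue `⟨a_{N-1}, A† L A a_{N-1}⟩ = ⟨P(a), L P(a)⟩`. Finally the contraction `φ` is
exactly `A† Ψ = A† L A a_{N-1}`, and its eigenvalue is positive because `P(a) ≠ 0`.
-/

open scoped ComplexInnerProductSpace

/-- The product vector `P(a)` of a family of vectors, `P(a) i = ∏ j, a j (i j)`. -/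
noncomputable def prodVec {N : ℕ} {d : Fin N → ℕ}
    (a : (j : Fin N) → EuclideanSpace ℂ (Fin (d j))) :
    EuclideanSpace ℂ ((j : Fin N) → Fin (d j)) :=
  WithLp.toLp 2 (fun i => ∏ j, a j (i j))

open ContinuousLinearMap Metric

section Rayleigh

variable {𝕜 E F : Type*} [RCLike 𝕜]
  [NormedAddCommGroup E] [InnerProductSpace 𝕜 E] [CompleteSpace E]
  [NormedAddCommGroup F] [InnerProductSpace 𝕜 F] [CompleteSpace F]

theorem IsSelfAdjoint.apply_eq_inner_smul_of_isMaxOn {T : E →L[𝕜] E} (hT : IsSelfAdjoint T)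
    {x : E} (hx : ‖x‖ = 1) (hmax : IsMaxOn T.reApplyInnerSelf (sphere 0 1) x) :
    T x = inner 𝕜 x (T x) • x := by
  have heig := hT.eq_smul_self_of_isLocalExtrOn (x₀ := x) (by rw [hx]; exact Or.inr hmax.localize)
  conv_rhs => rw [heig, inner_smul_right, inner_self_eq_norm_sq_to_K, hx]
  simpa using heig

theorem IsSelfAdjoint.adjoint_comp_apply_eq_inner_smul_of_isMaxOn {L : F →L[𝕜] F}
    (hL : IsSelfAdjoint L) (A : E →L[𝕜] F) {x : E} (hx : ‖x‖ = 1)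
    (hmax : IsMaxOn (fun y => RCLike.re (inner 𝕜 (A y) (L (A y)))) (sphere 0 1) x) :
    adjoint A (L (A x)) = inner 𝕜 (A x) (L (A x)) • x := by
  have hT : IsSelfAdjoint (adjoint A ∘L L ∘L A) := hL.adjoint_conj A
  have hre : ∀ y, (adjoint A ∘L L ∘L A).reApplyInnerSelf y =
      RCLike.re (inner 𝕜 (A y) (L (A y))) := by
    intro y
    rw [reApplyInnerSelf_apply, ← inner_conj_symm, RCLike.conj_re]
    simp [adjoint_inner_right]
  have heig := hT.apply_eq_inner_smul_of_isMaxOn hx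
    (by simpa only [IsMaxOn, IsMaxFilter, hre] using hmax)
  simpa [adjoint_inner_right] using heig

end Rayleigh

section ProductVector

variable {N : ℕ} {d : Fin N → ℕ} (a : (j : Fin N) → EuclideanSpace ℂ (Fin (d j)))

theorem prodVec_ne_zero (ha : ∀ j, a j ≠ 0) : prodVec a ≠ 0 := by
  have hcoord : ∀ j, ∃ k, a j k ≠ 0 := fun j => by
    by_contra! h
    exact ha j (by ext k; simp [h k])
  choose i hi using hcoord
  intro h
  have hprod : ∏ j, a j (i j) = 0 := congrFun (congrArg WithLp.ofLp h) i
  exact Finset.prod_ne_zero_iff.mpr (fun j _ => hi j) hprod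

theorem prodVec_update_apply (j : Fin N) (x : EuclideanSpace ℂ (Fin (d j)))
    (i : (j : Fin N) → Fin (d j)) :
    prodVec (Function.update a j x) i = (∏ k ∈ Finset.univ.erase j, a k (i k)) * x (i j) := by
  change ∏ k, Function.update a j x k (i k) = _
  rw [← Finset.prod_erase_mul _ _ (Finset.mem_univ j), Function.update_self]
  congr 1
  exact Finset.prod_congr rfl fun k hk => by rw [Function.update_of_ne (Finset.ne_of_mem_erase hk)]

noncomputable def prodVecUpdateCLM (j : Fin N) :
    EuclideanSpace ℂ (Fin (d j)) →L[ℂ] EuclideanSpace ℂ ((j : Fin N) → Fin (d j)) :=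
  LinearMap.toContinuousLinearMap
    { toFun := fun x => prodVec (Function.update a j x)
      map_add' := fun x y => by
        ext i
        simp only [prodVec_update_apply, PiLp.add_apply, mul_add]
      map_smul' := fun c x => by
        ext i
        simp only [prodVec_update_apply, PiLp.smul_apply, smul_eq_mul, RingHom.id_apply]
        ring }

@[simp]
theorem prodVecUpdateCLM_apply (j : Fin N) (x : EuclideanSpace ℂ (Fin (d j))) :
    prodVecUpdateCLM a j x = prodVec (Function.update a j x) :=
  rfl

theorem prodVecUpdateCLM_self (j : Fin N) : prodVecUpdateCLM a j (a j) = prodVec a := by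
  simp

theorem adjoint_prodVecUpdateCLM_apply (j : Fin N)
    (Ψ : EuclideanSpace ℂ ((j : Fin N) → Fin (d j))) (k : Fin (d j)) :
    adjoint (prodVecUpdateCLM a j) Ψ k =
      ⟪prodVec (Function.update a j (EuclideanSpace.single k 1)), Ψ⟫ := by
  rw [← prodVecUpdateCLM_apply, ← adjoint_inner_right, EuclideanSpace.inner_single_left]
  simp

theorem isMaxOn_comp_prodVecUpdateCLM {g : EuclideanSpace ℂ ((j : Fin N) → Fin (d j)) → ℝ}
    (ha : ∀ j, ‖a j‖ = 1)
    (hmax : ∀ b : (j : Fin N) → EuclideanSpace ℂ (Fin (d j)),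
      (∀ j, ‖b j‖ = 1) → g (prodVec b) ≤ g (prodVec a)) (j : Fin N) :
    IsMaxOn (g ∘ prodVecUpdateCLM a j) (sphere 0 1) (a j) := by
  intro x hx
  rw [Set.mem_ofPred_eq, Function.comp_apply, Function.comp_apply, prodVecUpdateCLM_self]
  refine hmax _ fun k => ?_
  rcases eq_or_ne k j with rfl | hk
  · simpa using hx
  · rw [Function.update_of_ne hk, ha k]

end ProductVector

theorem backward_iteration_general {N : ℕ} {d : Fin (N + 1) → ℕ}
    (L : EuclideanSpace ℂ ((j : Fin (N + 1)) → Fin (d j)) →L[ℂ]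
        EuclideanSpace ℂ ((j : Fin (N + 1)) → Fin (d j)))
    (hLsa : IsSelfAdjoint L)
    (hLpos : ∀ x : EuclideanSpace ℂ ((j : Fin (N + 1)) → Fin (d j)),
      x ≠ 0 → 0 < (⟪x, L x⟫).re)
    (a : (j : Fin (N + 1)) → EuclideanSpace ℂ (Fin (d j)))
    (ha : ∀ j, ‖a j‖ = 1)
    (hmax : ∀ b : (j : Fin (N + 1)) → EuclideanSpace ℂ (Fin (d j)),
      (∀ j, ‖b j‖ = 1) →
      (⟪prodVec b, L (prodVec b)⟫).re ≤ (⟪prodVec a, L (prodVec a)⟫).re)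
    (Ψ : EuclideanSpace ℂ ((j : Fin (N + 1)) → Fin (d j)))
    (hΨ : Ψ = L (prodVec a))
    (φ : EuclideanSpace ℂ (Fin (d (Fin.last N))))
    (hφ : ∀ k : Fin (d (Fin.last N)),
      φ k = ⟪prodVec (Function.update a (Fin.last N) (EuclideanSpace.single k 1)), Ψ⟫) :
    (∃ ν : ℂ, ν ≠ 0 ∧ ν • a (Fin.last N) = φ) ∧
    (⟪prodVec a, L (prodVec a)⟫ • a (Fin.last N) = φ ∧
      0 < (⟪prodVec a, L (prodVec a)⟫).re) := by
  have hφ_adjoint : φ = adjoint (prodVecUpdateCLM a (Fin.last N)) Ψ := by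
    ext k
    rw [hφ, adjoint_prodVecUpdateCLM_apply]
  have hsmul : ⟪prodVec a, L (prodVec a)⟫ • a (Fin.last N) = φ := by
    rw [hφ_adjoint, hΨ, ← prodVecUpdateCLM_self a (Fin.last N)]
    exact (hLsa.adjoint_comp_apply_eq_inner_smul_of_isMaxOn _ (ha _)
      (isMaxOn_comp_prodVecUpdateCLM a (g := fun x => (⟪x, L x⟫).re) ha hmax _)).symm
  have hpos : 0 < (⟪prodVec a, L (prodVec a)⟫).re :=
    hLpos _ (prodVec_ne_zero a fun j => norm_ne_zero_iff.mp (by simp [ha j]))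
  exact ⟨⟨_, fun h => by simp [h] at hpos, hsmul⟩, hsmul, hpos⟩

/-- **Theorem 2 (Backward iteration).**  If the family of unit vectors `a` maximizes
`⟨P(b), L P(b)⟩` over all families of unit vectors for a positive operator `L` on the
`(N+1)`-partite space, `Ψ = L P(a)`, and `φ k = ⟨P(a)[last ↦ e_k], Ψ⟩` is the
contraction `⟨a₀,…,a_{N-1}, ⋅ | Ψ⟩`, then there is `ν ≠ 0` with `ν • a_last = φ`;
in fact one may take `ν = ⟨P(a), L P(a)⟩ > 0`. -/
theorem backward_iteration {N : ℕ} {d : Fin (N + 1) → ℕ} (hd : ∀ j, 1 ≤ d j)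
    (L : EuclideanSpace ℂ ((j : Fin (N + 1)) → Fin (d j)) →L[ℂ]
        EuclideanSpace ℂ ((j : Fin (N + 1)) → Fin (d j)))
    (hLsa : IsSelfAdjoint L)
    (hLpos : ∀ x : EuclideanSpace ℂ ((j : Fin (N + 1)) → Fin (d j)),
      x ≠ 0 → 0 < (⟪x, L x⟫).re)
    (a : (j : Fin (N + 1)) → EuclideanSpace ℂ (Fin (d j)))
    (ha : ∀ j, ‖a j‖ = 1)
    (hmax : ∀ b : (j : Fin (N + 1)) → EuclideanSpace ℂ (Fin (d j)),
      (∀ j, ‖b j‖ = 1) →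
      (⟪prodVec b, L (prodVec b)⟫).re ≤ (⟪prodVec a, L (prodVec a)⟫).re)
    (Ψ : EuclideanSpace ℂ ((j : Fin (N + 1)) → Fin (d j)))
    (hΨ : Ψ = L (prodVec a))
    (φ : EuclideanSpace ℂ (Fin (d (Fin.last N))))
    (hφ : ∀ k : Fin (d (Fin.last N)),
      φ k = ⟪prodVec (Function.update a (Fin.last N) (EuclideanSpace.single k 1)), Ψ⟫) :
    (∃ ν : ℂ, ν ≠ 0 ∧ ν • a (Fin.last N) = φ) ∧
    (⟪prodVec a, L (prodVec a)⟫ • a (Fin.last N) = φ ∧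
      0 < (⟪prodVec a, L (prodVec a)⟫).re) :=
  backward_iteration_general L hLsa hLpos a ha hmax Ψ hΨ φ hφ
end

section
/- Let L be a self-adjoint continuous linear operator on the N-partite Hilbert space H, and let ρ be a finite convex combination of projectors onto unit product vectors, i.e., ρ = Σ_{i ∈ I} p_i • (orthogonal projection onto span of v_i) with I finite, p_i ≥ 0, Σ p_i = 1, and each v_i a unit product vector. Then tr(L ρ) ≤ g_max(L), where g_max(L) is the supremum of ⟨w, L w⟩ over all unit product vectors w. (Soundness of the entanglement criterion: separable states cannot violate tr(Lρ) ≤ g_max.) -/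
open scoped ComplexInnerProductSpace

def IsUnitProd {N : ℕ} {d : Fin N → ℕ}
    (v : EuclideanSpace ℂ ((j : Fin N) → Fin (d j))) : Prop :=
  ∃ a : (j : Fin N) → EuclideanSpace ℂ (Fin (d j)), (∀ j, ‖a j‖ = 1) ∧ v = prodVec a

/-! A separable state `ρ = Σ pᵢ |vᵢ⟩⟨vᵢ|` gives `tr(Lρ) = Σ pᵢ ⟨vᵢ, L vᵢ⟩`, a convex combination of
values of `w ↦ re ⟨w, L w⟩` at unit product vectors, so it cannot exceed their supremum. That
supremum is finite, at most `‖L‖`, because `‖P(a)‖ = ∏ⱼ ‖aⱼ‖`. -/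

open InnerProductSpace

section RankOne

variable {𝕜 E : Type*} [RCLike 𝕜] [NormedAddCommGroup E] [InnerProductSpace 𝕜 E]

theorem Submodule.starProjection_span_singleton_eq_rankOne {v : E} (hv : ‖v‖ = 1) :
    (𝕜 ∙ v).starProjection = rankOne 𝕜 v v := by
  ext w
  rw [Submodule.starProjection_unit_singleton 𝕜 hv, rankOne_apply]

theorem LinearMap.trace_comp_sum_smul_rankOne_self [FiniteDimensional 𝕜 E] {ι : Type*}
    [Fintype ι] (L : E →L[𝕜] E) (c : ι → 𝕜) (v : ι → E) :
    LinearMap.trace 𝕜 E (L ∘L ∑ i, c i • rankOne 𝕜 (v i) (v i)).toLinearMap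
      = ∑ i, c i * inner 𝕜 (v i) (L (v i)) := by
  simp [ContinuousLinearMap.comp_finsetSum, comp_rankOne, trace_rankOne]

theorem ContinuousLinearMap.re_inner_self_apply_le (L : E →L[𝕜] E) (w : E) :
    RCLike.re (inner 𝕜 w (L w)) ≤ ‖L‖ * ‖w‖ ^ 2 :=
  calc RCLike.re (inner 𝕜 w (L w))
      ≤ ‖w‖ * ‖L w‖ := (RCLike.re_le_norm _).trans (norm_inner_le_norm _ _)
    _ ≤ ‖w‖ * (‖L‖ * ‖w‖) := by gcongr; exact L.le_opNorm w
    _ = ‖L‖ * ‖w‖ ^ 2 := by ring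

end RankOne

section ProductVectors

variable {N : ℕ} {d : Fin N → ℕ}

theorem norm_prodVec (a : (j : Fin N) → EuclideanSpace ℂ (Fin (d j))) :
    ‖prodVec a‖ = ∏ j, ‖a j‖ := by
  have hsq : ‖prodVec a‖ ^ 2 = (∏ j, ‖a j‖) ^ 2 := by
    simp only [EuclideanSpace.norm_sq_eq, prodVec, norm_prod, ← Finset.prod_pow]
    exact (Fintype.prod_sum fun j k => ‖a j k‖ ^ 2).symm
  exact (pow_left_inj₀ (norm_nonneg _) (by positivity) two_ne_zero).mp hsq

theorem IsUnitProd.norm_eq_one {v : EuclideanSpace ℂ ((j : Fin N) → Fin (d j))}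
    (hv : IsUnitProd v) : ‖v‖ = 1 := by
  obtain ⟨a, ha, rfl⟩ := hv
  simp [norm_prodVec, ha]

end ProductVectors

theorem separable_state_bound_general {N : ℕ} {d : Fin (N + 1) → ℕ}
    (L ρ : EuclideanSpace ℂ ((j : Fin (N + 1)) → Fin (d j)) →L[ℂ]
        EuclideanSpace ℂ ((j : Fin (N + 1)) → Fin (d j)))
    {ι : Type*} [Fintype ι]
    (p : ι → ℝ) (hp : ∀ i, 0 ≤ p i) (hpsum : ∑ i, p i = 1)
    (v : ι → EuclideanSpace ℂ ((j : Fin (N + 1)) → Fin (d j)))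
    (hv : ∀ i, IsUnitProd (v i))
    (hρ : ρ = ∑ i, (p i : ℂ) •
      ((ℂ ∙ v i).subtypeL ∘L (ℂ ∙ v i).orthogonalProjectionOnto)) :
    (LinearMap.trace ℂ _ (L ∘L ρ).toLinearMap).re
      ≤ sSup {r : ℝ | ∃ w, IsUnitProd w ∧ r = (⟪w, L w⟫).re} := by
  set S := {r : ℝ | ∃ w, IsUnitProd w ∧ r = (⟪w, L w⟫).re}
  have hbdd : BddAbove S := ⟨‖L‖, by
    rintro r ⟨w, hw, rfl⟩
    simpa [hw.norm_eq_one] using L.re_inner_self_apply_le w⟩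
  have htrace : LinearMap.trace ℂ _ (L ∘L ρ).toLinearMap
      = ∑ i, (p i : ℂ) * ⟪v i, L (v i)⟫ := by
    have hproj : ∀ i, (ℂ ∙ v i).subtypeL ∘L (ℂ ∙ v i).orthogonalProjectionOnto
        = rankOne ℂ (v i) (v i) := fun i =>
      Submodule.starProjection_span_singleton_eq_rankOne (hv i).norm_eq_one
    simp_rw [hρ, hproj]
    exact LinearMap.trace_comp_sum_smul_rankOne_self L _ v
  rw [htrace, Complex.re_sum]
  simp_rw [Complex.re_ofReal_mul, ← smul_eq_mul]
  exact (convex_Iic (sSup S)).sum_mem (fun i _ => hp i) hpsum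
    fun i _ => le_csSup hbdd ⟨v i, hv i, rfl⟩

/-- **Soundness of the entanglement criterion.**  Let `L` be self-adjoint on the
`(N+1)`-partite space and let `ρ = Σ_i p_i |v_i⟩⟨v_i|` be a finite convex combination of
projectors onto unit product vectors.  Then `tr(L ρ) ≤ g_max(L)`, the supremum of
`⟨w, L w⟩` over unit product vectors `w`. -/
theorem separable_state_bound {N : ℕ} {d : Fin (N + 1) → ℕ}
    (L ρ : EuclideanSpace ℂ ((j : Fin (N + 1)) → Fin (d j)) →L[ℂ]
        EuclideanSpace ℂ ((j : Fin (N + 1)) → Fin (d j)))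
    (hLsa : IsSelfAdjoint L)
    {ι : Type*} [Fintype ι]
    (p : ι → ℝ) (hp : ∀ i, 0 ≤ p i) (hpsum : ∑ i, p i = 1)
    (v : ι → EuclideanSpace ℂ ((j : Fin (N + 1)) → Fin (d j)))
    (hv : ∀ i, IsUnitProd (v i))
    (hρ : ρ = ∑ i, (p i : ℂ) •
      ((ℂ ∙ v i).subtypeL ∘L (ℂ ∙ v i).orthogonalProjectionOnto)) :
    (LinearMap.trace ℂ _ (L ∘L ρ).toLinearMap).re
      ≤ sSup {r : ℝ | ∃ w, IsUnitProd w ∧ r = (⟪w, L w⟫).re} :=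
  separable_state_bound_general L ρ p hp hpsum v hv hρ
end
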